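/- The insertion correspondence Φ is a bijection between injective words with letters in the alphabet {i^{(j)} : i ∈ ℤ, j ≥ 1} and pairs (P, Q) where P is a local binary search labeling and Q is a decreasing labeling of a common indexed forest F. -/

import Mathlib

/-- Generic labeled plane binary trees: internal nodes carry a label in `α`. -/
inductive GT (α : Type) where
  | leaf : GT α
  | node : α → GT α → GT α → GT α
deriving DecidableEq

/-- Number of internal nodes. -/
def GT.size {α : Type} : GT α → ℕ
  | .leaf => 0
  | .node _ l r => l.size + r.size + 1

/-- Multiset of labels of internal nodes. -/
def GT.labels {α : Type} : GT α → Multiset α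
  | .leaf => 0
  | .node k l r => k ::ₘ (l.labels + r.labels)

/-- Relabel a labeled tree. -/
def GT.map {α β : Type} (f : α → β) : GT α → GT β
  | .leaf => .leaf
  | .node k l r => .node (f k) (l.map f) (r.map f)

/-- Root label, if any. -/
def GT.rootLabel? {α : Type} : GT α → Option α
  | .leaf => none
  | .node k _ _ => some k

/-- Insert a located tree into a list of located trees, keeping the list sorted
by starting position. -/
def insSorted {α : Type} (x : ℤ × GT α) : List (ℤ × GT α) → List (ℤ × GT α)
  | [] => [x]
  | y :: ys => if x.1 ≤ y.1 then x :: y :: ys else y :: insSorted x ys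

/-- One step of the insertion correspondence `Φ`: insert the letter `c` (with
integer value `val c`, letters compared by the strict order `lt`) into the
current labeled indexed forest, given as a list of (starting position, labeled
tree) pairs sorted by position. If the value of `c` is outside the support, a
new node is created there, capturing the adjacent trees (if any) as children;
if it lies in the support interval of a tree with root label `rl`, the new node
becomes the new root, with that tree as left child (and the next tree, if now
adjacent, as right child) when `rl < c`, and symmetrically otherwise. -/
def insertL {α : Type} [DecidableEq α] (val : α → ℤ) (lt : α → α → Bool)
    (s : List (ℤ × GT α)) (c : α) : List (ℤ × GT α) :=
  let i := val c
  match s.find? (fun p => decide (p.1 ≤ i ∧ i < p.1 + (p.2.size : ℤ))) with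
  | some (a, t) =>
      let rest := s.filter (fun p => decide (p.1 ≠ a))
      match t.rootLabel? with
      | none => s
      | some rl =>
        if lt rl c then
          match rest.find? (fun p => decide (p.1 = a + (t.size : ℤ) + 1)) with
          | some (a', t') =>
              insSorted (a, GT.node c t t')
                (rest.filter (fun p => decide (p.1 ≠ a')))
          | none => insSorted (a, GT.node c t GT.leaf) rest
        else
          match rest.find? (fun p => decide (p.1 + (p.2.size : ℤ) = a - 1)) with
          | some (a'', t'') =>
              insSorted (a'', GT.node c t'' t)
                (rest.filter (fun p => decide (p.1 ≠ a'')))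
          | none => insSorted (a - 1, GT.node c GT.leaf t) rest
  | none =>
      let lo := s.find? (fun p => decide (p.1 + (p.2.size : ℤ) = i))
      let ro := s.find? (fun p => decide (p.1 = i + 1))
      let rest := s.filter
        (fun p => decide (¬(p.1 + (p.2.size : ℤ) = i ∨ p.1 = i + 1)))
      match lo, ro with
      | some (a, t), some (_, t') => insSorted (a, GT.node c t t') rest
      | some (a, t), none => insSorted (a, GT.node c t GT.leaf) rest
      | none, some (_, t') => insSorted (i, GT.node c GT.leaf t') rest
      | none, none => insSorted (i, GT.node c GT.leaf GT.leaf) rest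

/-- Insert all the letters of a word, starting from the empty forest. -/
def insertAll {α : Type} [DecidableEq α] (val : α → ℤ) (lt : α → α → Bool)
    (W : List α) : List (ℤ × GT α) :=
  W.foldl (insertL val lt) []

/-- The support of a located labeled forest. -/
def SuppS {α : Type} (s : List (ℤ × GT α)) : Set ℤ :=
  {i | ∃ p ∈ s, p.1 ≤ i ∧ i < p.1 + (p.2.size : ℤ)}

/-- Strict lexicographic order on the alphabet `{i^{(j)}}`, encoded as pairs. -/
def lexLtB (p q : ℤ × ℕ) : Bool :=
  decide (p.1 < q.1 ∨ (p.1 = q.1 ∧ p.2 < q.2))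

/-- Strict lexicographic order on the alphabet, as a proposition. -/
def lexLt (p q : ℤ × ℕ) : Prop := p.1 < q.1 ∨ (p.1 = q.1 ∧ p.2 < q.2)

/-- The root label of `T` (if any) is smaller than `c` in the alphabet order. -/
def rootLtA (c : ℤ × ℕ) : GT (ℤ × ℕ) → Prop
  | .leaf => True
  | .node k _ _ => lexLt k c

/-- The root label of `T` (if any) is larger than `c` in the alphabet order. -/
def rootGtA (c : ℤ × ℕ) : GT (ℤ × ℕ) → Prop
  | .leaf => True
  | .node k _ _ => lexLt c k

/-- Local binary search labeling conditions, for a labeled tree whose inorder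
canonical labels start at `a`. -/
def IsLBS : GT (ℤ × ℕ) → ℤ → Prop
  | .leaf, _ => True
  | .node k l r, a =>
      (a ≤ k.1 ∧ k.1 < a + ((l.size + r.size + 1 : ℕ) : ℤ)) ∧
      rootLtA k l ∧ rootGtA k r ∧ IsLBS l a ∧ IsLBS r (a + (l.size : ℤ) + 1)

/-- The root label of `T` (if any) is smaller than `k`. -/
def rootBelow (k : ℕ) : GT ℕ → Prop
  | .leaf => True
  | .node m _ _ => m < k

/-- Decreasing labelings: labels strictly decrease away from the root. -/
def IsDec : GT ℕ → Prop
  | .leaf => True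
  | .node k l r => rootBelow k l ∧ rootBelow k r ∧ IsDec l ∧ IsDec r

/-- The insertion correspondence `Φ` on injective words over `{i^{(j)}}`,
recording simultaneously the letters (`P`-symbol) and the insertion times
(`Q`-symbol) as node labels `((letter), time)`. -/
def Phi2 (W : List (ℤ × ℕ)) : List (ℤ × GT ((ℤ × ℕ) × ℕ)) :=
  insertAll (fun x => x.1.1) (fun p q => lexLtB p.1 q.1)
    (W.zipIdx.map (fun nc => (nc.1, nc.2 + 1)))

/-- A valid pair `(P, Q)` of common shape, encoded as a single located forest
with combined labels: the supports are maximal intervals, the trees nonempty,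
the letter labels form a local binary search labeling with pairwise distinct
letters, and the time labels form a decreasing labeling with labels exactly
`{1, …, N}` (`N` the total number of nodes). -/
def GoodPair (s : List (ℤ × GT ((ℤ × ℕ) × ℕ))) : Prop :=
  s.Chain' (fun p q => p.1 + (p.2.size : ℤ) + 1 ≤ q.1) ∧
  (∀ p ∈ s, p.2 ≠ GT.leaf) ∧
  (∀ p ∈ s, IsLBS (p.2.map Prod.fst) p.1) ∧
  ((s.map (fun p => (p.2.map Prod.fst).labels)).sum : Multiset (ℤ × ℕ)).Nodup ∧
  (∀ p ∈ s, IsDec (p.2.map Prod.snd)) ∧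
  ((s.map (fun p => (p.2.map Prod.snd).labels)).sum : Multiset ℕ)
    = (Multiset.range ((s.map (fun p => p.2.size)).sum)).map (· + 1)

/-!
Every step of `Φ` is a *graft*: a new root is placed at a position `j` outside the support and
takes as children the trees ending at `j - 1` and starting at `j + 1`. Grafting keeps the trees
separated, and, thanks to the comparison `Φ` makes with the root of the tree containing the
inserted value, it preserves the local binary search and decreasing conditions. So `Φ W` is a
valid pair whose labels are the letters of `W` stamped with their insertion times, and these
determine `W`. Conversely, in a valid pair the node with the largest time is a root; deleting it
splits its tree into its two subtrees and leaves a valid pair with one time less. Re-inserting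
its letter rebuilds the forest, since the binary search condition at that root steers `Φ` into
the graft at the position of the root.
-/

open List

namespace GT

variable {α β : Type}

theorem labels_map (f : α → β) : ∀ t : GT α, (t.map f).labels = t.labels.map f
  | .leaf => rfl
  | .node k l r => by simp [GT.map, GT.labels, labels_map f l, labels_map f r]

theorem size_map (f : α → β) : ∀ t : GT α, (t.map f).size = t.size
  | .leaf => rfl
  | .node k l r => by simp [GT.map, GT.size, size_map f l, size_map f r]

theorem card_labels : ∀ t : GT α, Multiset.card t.labels = t.size
  | .leaf => rfl
  | .node k l r => by simp [GT.labels, GT.size, card_labels l, card_labels r]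

end GT

section LocatedForest

variable {α : Type}

def Precedes (p q : ℤ × GT α) : Prop := p.1 + p.2.size + 1 ≤ q.1

theorem Precedes.trans {p q r : ℤ × GT α} (hpq : Precedes p q) (hqr : Precedes q r) :
    Precedes p r := by
  unfold Precedes at *; omega

instance : Trans (@Precedes α) Precedes Precedes := ⟨Precedes.trans⟩

theorem precedes_or_precedes_of_mem {s : List (ℤ × GT α)} (hs : s.Pairwise Precedes)
    {p q : ℤ × GT α} (hp : p ∈ s) (hq : q ∈ s) (hne : p ≠ q) : Precedes p q ∨ Precedes q p := by
  induction s with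
  | nil => simp at hp
  | cons x s ih =>
    rw [pairwise_cons] at hs
    rcases mem_cons.1 hp with rfl | hp'
    · rcases mem_cons.1 hq with rfl | hq'
      · exact absurd rfl hne
      · exact Or.inl (hs.1 q hq')
    · rcases mem_cons.1 hq with rfl | hq'
      · exact Or.inr (hs.1 p hp')
      · exact ih hs.2 hp' hq'

def forestLabels (s : List (ℤ × GT α)) : Multiset α := (s.map fun p => p.2.labels).sum

@[simp] theorem forestLabels_nil : forestLabels ([] : List (ℤ × GT α)) = 0 := rfl

@[simp] theorem forestLabels_cons (p : ℤ × GT α) (s : List (ℤ × GT α)) :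
    forestLabels (p :: s) = p.2.labels + forestLabels s := by
  simp [forestLabels]

@[simp] theorem forestLabels_append (s t : List (ℤ × GT α)) :
    forestLabels (s ++ t) = forestLabels s + forestLabels t := by
  simp [forestLabels]

theorem forestLabels_perm {s t : List (ℤ × GT α)} (h : s ~ t) :
    forestLabels s = forestLabels t :=
  (h.map _).sum_eq

theorem mem_forestLabels {s : List (ℤ × GT α)} {x : α} :
    x ∈ forestLabels s ↔ ∃ p ∈ s, x ∈ p.2.labels := by
  induction s with
  | nil => simp
  | cons p s ih => simp [ih]

theorem card_forestLabels (s : List (ℤ × GT α)) :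
    Multiset.card (forestLabels s) = (s.map fun p => p.2.size).sum := by
  induction s with
  | nil => rfl
  | cons p s ih => simp [GT.card_labels, ih]

theorem forestLabels_map {β : Type} (f : α → β) (s : List (ℤ × GT α)) :
    (s.map fun p => (p.2.map f).labels).sum = (forestLabels s).map f := by
  induction s with
  | nil => rfl
  | cons p s ih =>
    rw [map_cons, sum_cons, ih, GT.labels_map, forestLabels_cons, Multiset.map_add]

theorem insSorted_perm (x : ℤ × GT α) : ∀ s, insSorted x s ~ x :: s
  | [] => Perm.refl _
  | y :: s => by
    unfold insSorted
    split
    · exact Perm.refl _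
    · exact ((insSorted_perm x s).cons y).trans (Perm.swap x y s)

theorem pairwise_insSorted {x : ℤ × GT α} {s : List (ℤ × GT α)} (hs : s.Pairwise Precedes)
    (hx : ∀ y ∈ s, Precedes y x ∨ Precedes x y) : (insSorted x s).Pairwise Precedes := by
  induction s with
  | nil => exact pairwise_singleton _ _
  | cons y s ih =>
    rw [pairwise_cons] at hs
    unfold insSorted
    split
    · have hxy : Precedes x y := (hx y mem_cons_self).resolve_left (by unfold Precedes; omega)
      exact pairwise_cons.2 ⟨forall_mem_cons.2 ⟨hxy, fun z hz => hxy.trans (hs.1 z hz)⟩,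
        pairwise_cons.2 hs⟩
    · have hyx : Precedes y x := (hx y mem_cons_self).resolve_right (by unfold Precedes; omega)
      refine pairwise_cons.2 ⟨fun z hz => ?_, ih hs.2 fun z hz => hx z (mem_cons_of_mem _ hz)⟩
      rcases mem_cons.1 ((insSorted_perm x s).subset hz) with rfl | hz
      · exact hyx
      · exact hs.1 z hz

theorem insSorted_append_of_lt {x : ℤ × GT α} {A : List (ℤ × GT α)} (B : List (ℤ × GT α))
    (hA : ∀ y ∈ A, y.1 < x.1) : insSorted x (A ++ B) = A ++ insSorted x B := by
  induction A with
  | nil => rfl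
  | cons y A ih =>
    simp only [cons_append, insSorted, if_neg (not_le.2 (hA y mem_cons_self))]
    rw [ih fun z hz => hA z (mem_cons_of_mem _ hz)]

theorem insSorted_append_cons {x : ℤ × GT α} {A B : List (ℤ × GT α)}
    (hA : ∀ y ∈ A, y.1 < x.1) (hB : ∀ y ∈ B, x.1 ≤ y.1) :
    insSorted x (A ++ B) = A ++ x :: B := by
  rw [insSorted_append_of_lt B hA]
  cases B with
  | nil => rfl
  | cons y B => simp [insSorted, hB y mem_cons_self]

end LocatedForest

section Graft

variable {α : Type} {s : List (ℤ × GT α)}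

theorem find?_eq_some_of_unique {β : Type} {p : β → Bool} {l : List β} {x : β} (hx : x ∈ l)
    (hpx : p x = true) (hu : ∀ y ∈ l, p y = true → y = x) : l.find? p = some x := by
  cases h : l.find? p with
  | none => exact absurd hpx (find?_eq_none.1 h x hx)
  | some y => rw [hu y (mem_of_find?_eq_some h) (find?_some h)]

theorem eq_of_mem_of_fst_eq (hs : s.Pairwise Precedes) {p q : ℤ × GT α}
    (hp : p ∈ s) (hq : q ∈ s) (h : p.1 = q.1) : p = q := by
  by_contra hpq
  rcases precedes_or_precedes_of_mem hs hp hq hpq with h | h <;> unfold Precedes at h <;> omega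

theorem eq_of_mem_of_end_eq (hs : s.Pairwise Precedes) {p q : ℤ × GT α}
    (hp : p ∈ s) (hq : q ∈ s) (h : p.1 + p.2.size = q.1 + q.2.size) : p = q := by
  by_contra hpq
  rcases precedes_or_precedes_of_mem hs hp hq hpq with h | h <;> unfold Precedes at h <;> omega

theorem fst_eq_iff_end_eq (hs : s.Pairwise Precedes) {p q : ℤ × GT α}
    (hp : p ∈ s) (hq : q ∈ s) : p.1 = q.1 ↔ p.1 + p.2.size = q.1 + q.2.size :=
  ⟨fun h => by rw [eq_of_mem_of_fst_eq hs hp hq h], fun h => by rw [eq_of_mem_of_end_eq hs hp hq h]⟩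

def treeBefore (s : List (ℤ × GT α)) (j : ℤ) : GT α :=
  ((s.find? fun p => p.1 + p.2.size = j).map Prod.snd).getD .leaf

def treeAfter (s : List (ℤ × GT α)) (j : ℤ) : GT α :=
  ((s.find? fun p => p.1 = j + 1).map Prod.snd).getD .leaf

def graft (s : List (ℤ × GT α)) (j : ℤ) (c : α) : List (ℤ × GT α) :=
  insSorted (j - (treeBefore s j).size, .node c (treeBefore s j) (treeAfter s j))
    (s.filter fun p => ¬(p.1 + p.2.size = j ∨ p.1 = j + 1))

theorem treeBefore_eq {j : ℤ} {t : GT α}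
    (ht : t = .leaf ∨ (j - t.size, t) ∈ s) (hu : ∀ p ∈ s, p.1 + p.2.size = j → p.2 = t) :
    treeBefore s j = t := by
  unfold treeBefore
  cases h : s.find? fun p => p.1 + p.2.size = j with
  | some p => simp [hu p (mem_of_find?_eq_some h) (by simpa using find?_some h)]
  | none =>
    rcases ht with rfl | ht
    · rfl
    · simpa using find?_eq_none.1 h _ ht

theorem treeAfter_eq {j : ℤ} {t : GT α}
    (ht : t = .leaf ∨ (j + 1, t) ∈ s) (hu : ∀ p ∈ s, p.1 = j + 1 → p.2 = t) :
    treeAfter s j = t := by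
  unfold treeAfter
  cases h : s.find? fun p => p.1 = j + 1 with
  | some p => simp [hu p (mem_of_find?_eq_some h) (by simpa using find?_some h)]
  | none =>
    rcases ht with rfl | ht
    · rfl
    · simpa using find?_eq_none.1 h _ ht

theorem treeBefore_mem (s : List (ℤ × GT α)) (j : ℤ) :
    treeBefore s j = .leaf ∨ (j - (treeBefore s j).size, treeBefore s j) ∈ s := by
  unfold treeBefore
  cases h : s.find? fun p => p.1 + p.2.size = j with
  | none => exact Or.inl rfl
  | some p =>
    obtain ⟨a, t⟩ := p
    have hj : a + t.size = j := by simpa using find?_some h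
    right
    simpa [← hj] using mem_of_find?_eq_some h

theorem treeAfter_mem (s : List (ℤ × GT α)) (j : ℤ) :
    treeAfter s j = .leaf ∨ (j + 1, treeAfter s j) ∈ s := by
  unfold treeAfter
  cases h : s.find? fun p => p.1 = j + 1 with
  | none => exact Or.inl rfl
  | some p =>
    obtain ⟨a, t⟩ := p
    have hj : a = j + 1 := by simpa using find?_some h
    right
    simpa [← hj] using mem_of_find?_eq_some h

theorem treeBefore_cons (p : ℤ × GT α) (s : List (ℤ × GT α)) (j : ℤ) :
    treeBefore (p :: s) j = if p.1 + p.2.size = j then p.2 else treeBefore s j := by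
  unfold treeBefore
  rw [find?_cons]
  split <;> simp_all

theorem treeAfter_cons (p : ℤ × GT α) (s : List (ℤ × GT α)) (j : ℤ) :
    treeAfter (p :: s) j = if p.1 = j + 1 then p.2 else treeAfter s j := by
  unfold treeAfter
  rw [find?_cons]
  split <;> simp_all

theorem forestLabels_eq_treeBefore_add (hs : s.Pairwise Precedes)
    (j : ℤ) :
    forestLabels s = (treeBefore s j).labels + (treeAfter s j).labels +
      forestLabels (s.filter fun p => ¬(p.1 + p.2.size = j ∨ p.1 = j + 1)) := by
  induction s with
  | nil => rfl
  | cons p s ih =>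
    rw [pairwise_cons] at hs
    have hlater : ∀ q ∈ s, p.1 + p.2.size < q.1 := fun q hq => by
      have := hs.1 q hq; unfold Precedes at this; omega
    rw [treeBefore_cons, treeAfter_cons, forestLabels_cons, ih hs.2]
    by_cases hb : p.1 + p.2.size = j
    · have hs0 : treeBefore s j = .leaf :=
        treeBefore_eq (Or.inl rfl) fun q hq h => absurd (hlater q hq) (by omega)
      rw [if_pos hb, if_neg (by omega), filter_cons_of_neg (by simp [hb]), hs0]
      simp only [GT.labels]
      abel
    by_cases ha : p.1 = j + 1
    · have hs0 : treeAfter s j = .leaf :=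
        treeAfter_eq (Or.inl rfl) fun q hq h => absurd (hlater q hq) (by omega)
      rw [if_neg hb, if_pos ha, filter_cons_of_neg (by simp [ha]), hs0]
      simp only [GT.labels]
      abel
    · rw [if_neg hb, if_neg ha, filter_cons_of_pos (by simp [ha, hb]), forestLabels_cons]
      abel

theorem mem_graft {j : ℤ} {c : α} {p : ℤ × GT α} (hp : p ∈ graft s j c) :
    p = (j - (treeBefore s j).size, .node c (treeBefore s j) (treeAfter s j)) ∨ p ∈ s := by
  rcases mem_cons.1 ((insSorted_perm _ _).subset hp) with h | h
  · exact Or.inl h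
  · exact Or.inr (mem_filter.1 h).1

theorem treeBefore_eq_of_mem (hs : s.Pairwise Precedes) {a : ℤ} {t : GT α}
    (hmem : (a, t) ∈ s) : treeBefore s (a + t.size) = t :=
  treeBefore_eq (Or.inr (by simpa using hmem)) fun q hq h =>
    by rw [eq_of_mem_of_end_eq hs hq hmem h]

theorem treeAfter_eq_of_mem (hs : s.Pairwise Precedes) {a : ℤ} {t : GT α}
    (hmem : (a, t) ∈ s) : treeAfter s (a - 1) = t :=
  treeAfter_eq (Or.inr (by simpa using hmem)) fun q hq h =>
    by rw [eq_of_mem_of_fst_eq hs hq hmem (by simpa using h)]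

theorem add_size_not_mem_suppS (hs : s.Pairwise Precedes) {a : ℤ}
    {t : GT α} (hmem : (a, t) ∈ s) : a + t.size ∉ SuppS s := by
  rintro ⟨p, hp, hpj⟩
  by_cases hpa : p = (a, t)
  · subst hpa; dsimp only at hpj; omega
  · rcases precedes_or_precedes_of_mem hs hp hmem hpa with h | h <;> dsimp only [Precedes] at h <;>
      omega

theorem sub_one_not_mem_suppS (hs : s.Pairwise Precedes) {a : ℤ}
    {t : GT α} (hmem : (a, t) ∈ s) : a - 1 ∉ SuppS s := by
  rintro ⟨p, hp, hpj⟩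
  by_cases hpa : p = (a, t)
  · subst hpa; dsimp only at hpj; omega
  · rcases precedes_or_precedes_of_mem hs hp hmem hpa with h | h <;> dsimp only [Precedes] at h <;>
      omega

theorem forestLabels_graft (hs : s.Pairwise Precedes) (j : ℤ) (c : α) :
    forestLabels (graft s j c) = c ::ₘ forestLabels s := by
  rw [graft, forestLabels_perm (insSorted_perm _ _), forestLabels_cons,
    forestLabels_eq_treeBefore_add hs j, GT.labels, Multiset.cons_add]

theorem graft_sorted (hs : s.Pairwise Precedes) {j : ℤ}
    (hj : j ∉ SuppS s) (c : α) :
    (graft s j c).Pairwise Precedes := by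
  refine pairwise_insSorted (hs.filter _) fun y hy => ?_
  simp only [mem_filter, decide_eq_true_eq, not_or] at hy
  obtain ⟨hy, hyb, hya⟩ := hy
  have hyj : ¬(y.1 ≤ j ∧ j < y.1 + y.2.size) := fun h => hj ⟨y, hy, h⟩
  simp only [Precedes, GT.size, Nat.cast_add, Nat.cast_one]
  rcases le_or_gt (y.1 + y.2.size) j with hle | hgt
  · left
    rcases treeBefore_mem s j with hL | hL
    · rw [hL, GT.size, Nat.cast_zero]; omega
    · have hne : y ≠ (j - (treeBefore s j).size, treeBefore s j) := by
        rintro rfl; simp at hyb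
      rcases precedes_or_precedes_of_mem hs hy hL hne with h | h <;> dsimp only [Precedes] at h <;>
        omega
  · right
    rcases treeAfter_mem s j with hR | hR
    · rw [hR, GT.size, Nat.cast_zero]; omega
    · have hne : y ≠ (j + 1, treeAfter s j) := by
        rintro rfl; simp at hya
      rcases precedes_or_precedes_of_mem hs hy hR hne with h | h <;> dsimp only [Precedes] at h <;>
        omega

end Graft

section InsertL

variable {α : Type} [DecidableEq α] {val : α → ℤ} {lt : α → α → Bool} {s : List (ℤ × GT α)}
  {c : α}

theorem insertL_eq_graft_of_not_mem_suppS
    (hc : val c ∉ SuppS s) :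
    insertL val lt s c = graft s (val c) c := by
  have hnone : s.find? (fun p => p.1 ≤ val c ∧ val c < p.1 + p.2.size) = none :=
    find?_eq_none.2 fun p hp h => hc ⟨p, hp, by simpa using h⟩
  simp only [insertL, hnone, graft, treeBefore, treeAfter]
  split <;> rename_i h1 h2 <;> simp only [h1, h2, Option.map_some, Option.map_none,
    Option.getD_some, Option.getD_none, GT.size, Nat.cast_zero, sub_zero]
  all_goals
    have hend := find?_some h1
    simp only [decide_eq_true_eq] at hend
    rw [← hend, add_sub_cancel_right]

theorem find?_containing_eq (hs : s.Pairwise Precedes) {a : ℤ} {t : GT α} (hmem : (a, t) ∈ s)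
    {i : ℤ} (hi : a ≤ i ∧ i < a + t.size) :
    s.find? (fun p => p.1 ≤ i ∧ i < p.1 + p.2.size) = some (a, t) :=
  find?_eq_some_of_unique hmem (by simpa using hi) fun q hq hqi => by
    by_contra hne
    simp only [decide_eq_true_eq] at hqi
    rcases precedes_or_precedes_of_mem hs hq hmem hne with h | h <;> dsimp only [Precedes] at h <;>
      omega

theorem insertL_eq_graft_of_lt (hs : s.Pairwise Precedes) {a : ℤ} {t : GT α} {k : α}
    (hmem : (a, t) ∈ s) (hroot : t.rootLabel? = some k) (hc : a ≤ val c ∧ val c < a + t.size)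
    (hlt : lt k c = true) : insertL val lt s c = graft s (a + t.size) c := by
  have hnext : (s.filter fun p => p.1 ≠ a).find? (fun p => p.1 = a + t.size + 1) =
      s.find? (fun p => p.1 = a + t.size + 1) := by
    rw [find?_filter]
    refine find?_congr fun p _ => ?_
    simp only [decide_eq_true_eq, decide_eq_decide]
    omega
  simp only [insertL, find?_containing_eq hs hmem hc, hroot, hlt, if_true, hnext, graft,
    treeBefore_eq_of_mem hs hmem, add_sub_cancel_right, treeAfter]
  split
  next _ a' t' h =>
    have ha' : a' = a + t.size + 1 := by simpa using find?_some h
    simp only [h, Option.map_some, Option.getD_some, filter_filter]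
    congr 1
    refine filter_congr fun p hp => ?_
    have hiff := fst_eq_iff_end_eq hs hp hmem
    grind
  next _ h =>
    simp only [h, Option.map_none, Option.getD_none]
    congr 1
    refine filter_congr fun p hp => ?_
    have hiff := fst_eq_iff_end_eq hs hp hmem
    have := find?_eq_none.1 h p hp
    grind

theorem insertL_eq_graft_of_not_lt (hs : s.Pairwise Precedes) {a : ℤ} {t : GT α} {k : α}
    (hmem : (a, t) ∈ s) (hroot : t.rootLabel? = some k) (hc : a ≤ val c ∧ val c < a + t.size)
    (hlt : lt k c = false) : insertL val lt s c = graft s (a - 1) c := by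
  have hprev : (s.filter fun p => p.1 ≠ a).find? (fun p => p.1 + p.2.size = a - 1) =
      s.find? (fun p => p.1 + p.2.size = a - 1) := by
    rw [find?_filter]
    refine find?_congr fun p _ => ?_
    simp only [decide_eq_true_eq, decide_eq_decide]
    omega
  simp only [insertL, find?_containing_eq hs hmem hc, hroot, hlt, Bool.false_eq_true, if_false,
    hprev, graft, treeAfter_eq_of_mem hs hmem, treeBefore]
  split
  next _ a'' t'' h =>
    have ha'' : a'' + t''.size = a - 1 := by simpa using find?_some h
    simp only [h, Option.map_some, Option.getD_some, filter_filter]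
    congr 1
    · congr 1; omega
    refine filter_congr fun p hp => ?_
    have hiff := fst_eq_iff_end_eq hs hp (mem_of_find?_eq_some h)
    grind
  next _ h =>
    simp only [h, Option.map_none, Option.getD_none, GT.size, Nat.cast_zero, sub_zero]
    congr 1
    refine filter_congr fun p hp => ?_
    have := find?_eq_none.1 h p hp
    grind

end InsertL

section Labelings

theorem lexLtB_iff {p q : ℤ × ℕ} : lexLtB p q = true ↔ lexLt p q := by
  simp [lexLtB, lexLt]

theorem lexLtB_eq_false_of_lexLt {p q : ℤ × ℕ} (h : lexLt p q) : lexLtB q p = false := by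
  rw [← Bool.not_eq_true, lexLtB_iff]
  unfold lexLt at *
  omega

theorem lexLt_or_lexLt_of_ne {p q : ℤ × ℕ} (h : p ≠ q) : lexLt p q ∨ lexLt q p := by
  unfold lexLt
  have : p.1 ≠ q.1 ∨ p.2 ≠ q.2 := by
    by_contra! h'
    exact h (Prod.ext h'.1 h'.2)
  omega

theorem rootLtA_of_isLBS {t : GT (ℤ × ℕ)} {a : ℤ} (ht : IsLBS t a) {x : ℤ × ℕ}
    (hx : a + t.size ≤ x.1) : rootLtA x t := by
  cases t with
  | leaf => trivial
  | node k l r => exact Or.inl (by have := ht.1.2; simp only [GT.size] at hx; omega)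

theorem rootGtA_of_isLBS {t : GT (ℤ × ℕ)} {a : ℤ} (ht : IsLBS t a) {x : ℤ × ℕ}
    (hx : x.1 < a) : rootGtA x t := by
  cases t with
  | leaf => trivial
  | node k l r => exact Or.inl (by have := ht.1.1; omega)

theorem isLBS_map_node_iff {k : (ℤ × ℕ) × ℕ} {l r : GT ((ℤ × ℕ) × ℕ)} {a : ℤ} :
    IsLBS ((GT.node k l r).map Prod.fst) a ↔
      (a ≤ k.1.1 ∧ k.1.1 < a + (GT.node k l r).size) ∧
      rootLtA k.1 (l.map Prod.fst) ∧ rootGtA k.1 (r.map Prod.fst) ∧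
      IsLBS (l.map Prod.fst) a ∧ IsLBS (r.map Prod.fst) (a + l.size + 1) := by
  simp only [GT.map, IsLBS, GT.size_map, GT.size, Nat.cast_add, Nat.cast_one]

theorem isDec_map_node_iff {k : (ℤ × ℕ) × ℕ} {l r : GT ((ℤ × ℕ) × ℕ)} :
    IsDec ((GT.node k l r).map Prod.snd) ↔
      rootBelow k.2 (l.map Prod.snd) ∧ rootBelow k.2 (r.map Prod.snd) ∧
      IsDec (l.map Prod.snd) ∧ IsDec (r.map Prod.snd) :=
  Iff.rfl

theorem rootBelow_of_forall_lt {t : GT ((ℤ × ℕ) × ℕ)} {b : ℕ} (h : ∀ x ∈ t.labels, x.2 < b) :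
    rootBelow b (t.map Prod.snd) := by
  cases t with
  | leaf => trivial
  | node k l r => exact h k (by simp [GT.labels])

theorem IsDec.forall_lt : ∀ {t : GT ℕ} {b : ℕ}, IsDec t → rootBelow b t → ∀ x ∈ t.labels, x < b
  | .leaf, _, _, _, x, hx => by simp [GT.labels] at hx
  | .node k l r, b, ⟨hl, hr, hdl, hdr⟩, hb, x, hx => by
    simp only [GT.labels, Multiset.mem_cons, Multiset.mem_add] at hx
    rcases hx with rfl | hx | hx
    · exact hb
    · exact (hdl.forall_lt hl x hx).trans hb
    · exact (hdr.forall_lt hr x hx).trans hb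

theorem IsDec.le_root {k : ℕ} {l r : GT ℕ} (h : IsDec (.node k l r)) :
    ∀ x ∈ (GT.node k l r).labels, x ≤ k :=
  fun x hx => Nat.le_of_lt_succ (h.forall_lt (Nat.lt_succ_self k) x hx)

end Labelings

section WellFormed

abbrev LabeledForest : Type := List (ℤ × GT ((ℤ × ℕ) × ℕ))

def phiInsert (s : LabeledForest) (c : (ℤ × ℕ) × ℕ) : LabeledForest :=
  insertL (fun x => x.1.1) (fun p q => lexLtB p.1 q.1) s c

structure WellFormed (s : LabeledForest) : Prop where
  sorted : s.Pairwise Precedes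
  ne_leaf : ∀ p ∈ s, p.2 ≠ .leaf
  isLBS : ∀ p ∈ s, IsLBS (p.2.map Prod.fst) p.1
  isDec : ∀ p ∈ s, IsDec (p.2.map Prod.snd)

variable {s : LabeledForest}

theorem WellFormed.rootLtA_treeBefore (hs : WellFormed s) {j : ℤ} {c : (ℤ × ℕ) × ℕ}
    (hj : j ≤ c.1.1) : rootLtA c.1 ((treeBefore s j).map Prod.fst) := by
  rcases treeBefore_mem s j with h | h
  · rw [h]; trivial
  · exact rootLtA_of_isLBS (hs.isLBS _ h) (by simp only [GT.size_map]; omega)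

theorem WellFormed.rootGtA_treeAfter (hs : WellFormed s) {j : ℤ} {c : (ℤ × ℕ) × ℕ}
    (hj : c.1.1 ≤ j) : rootGtA c.1 ((treeAfter s j).map Prod.fst) := by
  rcases treeAfter_mem s j with h | h
  · rw [h]; trivial
  · exact rootGtA_of_isLBS (hs.isLBS _ h) (by omega)

def GraftableAt (s : LabeledForest) (j : ℤ) (c : (ℤ × ℕ) × ℕ) : Prop :=
  j ∉ SuppS s ∧ (j - (treeBefore s j).size ≤ c.1.1 ∧ c.1.1 ≤ j + (treeAfter s j).size) ∧
    rootLtA c.1 ((treeBefore s j).map Prod.fst) ∧ rootGtA c.1 ((treeAfter s j).map Prod.fst)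

theorem wellFormed_graft (hs : WellFormed s) {j : ℤ} {c : (ℤ × ℕ) × ℕ} (hc : GraftableAt s j c)
    (htime : ∀ x ∈ forestLabels s, x.2 < c.2) : WellFormed (graft s j c) := by
  obtain ⟨hj, hrange, hL, hR⟩ := hc
  have hchild : ∀ {a : ℤ} {t : GT ((ℤ × ℕ) × ℕ)}, t = .leaf ∨ (a, t) ∈ s →
      IsLBS (t.map Prod.fst) a ∧ IsDec (t.map Prod.snd) ∧ rootBelow c.2 (t.map Prod.snd) := by
    rintro a t (rfl | ht)
    · exact ⟨trivial, trivial, trivial⟩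
    · exact ⟨hs.isLBS _ ht, hs.isDec _ ht, rootBelow_of_forall_lt fun x hx =>
        htime x (mem_forestLabels.2 ⟨_, ht, hx⟩)⟩
  obtain ⟨hLlbs, hLdec, hLtime⟩ := hchild (treeBefore_mem s j)
  obtain ⟨hRlbs, hRdec, hRtime⟩ := hchild (treeAfter_mem s j)
  refine ⟨graft_sorted hs.sorted hj c, ?_, ?_, ?_⟩ <;> intro p hp <;>
    rcases mem_graft hp with rfl | hp
  · simp
  · exact hs.ne_leaf p hp
  · refine isLBS_map_node_iff.2 ⟨?_, hL, hR, hLlbs, ?_⟩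
    · simp only [GT.size, Nat.cast_add, Nat.cast_one]; omega
    · rwa [sub_add_cancel]
  · exact hs.isLBS p hp
  · exact isDec_map_node_iff.2 ⟨hLtime, hRtime, hLdec, hRdec⟩
  · exact hs.isDec p hp

theorem exists_phiInsert_eq_graft (hs : WellFormed s) {c : (ℤ × ℕ) × ℕ}
    (hfresh : ∀ x ∈ forestLabels s, x.1 ≠ c.1) :
    ∃ j, phiInsert s c = graft s j c ∧ GraftableAt s j c := by
  by_cases hin : c.1.1 ∈ SuppS s
  · obtain ⟨⟨a, t⟩, hmem, hc⟩ := hin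
    dsimp only at hc
    obtain ⟨k, l, r, rfl⟩ : ∃ k l r, t = .node k l r := by
      cases t with
      | leaf => exact absurd rfl (hs.ne_leaf _ hmem)
      | node k l r => exact ⟨k, l, r, rfl⟩
    have hk : k.1 ≠ c.1 := hfresh k (mem_forestLabels.2 ⟨_, hmem, by simp [GT.labels]⟩)
    rcases lexLt_or_lexLt_of_ne hk with hlt | hgt
    · refine ⟨_, insertL_eq_graft_of_lt hs.sorted hmem rfl hc (lexLtB_iff.2 hlt),
        add_size_not_mem_suppS hs.sorted hmem, ?_, ?_, hs.rootGtA_treeAfter (by omega)⟩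
      · rw [treeBefore_eq_of_mem hs.sorted hmem]; omega
      · rw [treeBefore_eq_of_mem hs.sorted hmem]; exact hlt
    · refine ⟨_, insertL_eq_graft_of_not_lt hs.sorted hmem rfl hc
        (lexLtB_eq_false_of_lexLt hgt), sub_one_not_mem_suppS hs.sorted hmem, ?_,
        hs.rootLtA_treeBefore (by omega), ?_⟩
      · rw [treeAfter_eq_of_mem hs.sorted hmem]; simp only [GT.size, Nat.cast_add] at hc ⊢; omega
      · rw [treeAfter_eq_of_mem hs.sorted hmem]; exact hgt
  · exact ⟨_, insertL_eq_graft_of_not_mem_suppS hin, hin, by omega,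
      hs.rootLtA_treeBefore le_rfl, hs.rootGtA_treeAfter le_rfl⟩

theorem wellFormed_phiInsert (hs : WellFormed s) {c : (ℤ × ℕ) × ℕ}
    (hfresh : ∀ x ∈ forestLabels s, x.1 ≠ c.1) (htime : ∀ x ∈ forestLabels s, x.2 < c.2) :
    WellFormed (phiInsert s c) ∧ forestLabels (phiInsert s c) = c ::ₘ forestLabels s := by
  obtain ⟨j, heq, hj⟩ := exists_phiInsert_eq_graft hs hfresh
  rw [heq]
  exact ⟨wellFormed_graft hs hj htime, forestLabels_graft hs.sorted j c⟩

end WellFormed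

section Deletion

variable {α : Type}

def located (a : ℤ) : GT α → List (ℤ × GT α)
  | .leaf => []
  | .node k l r => [(a, .node k l r)]

@[simp] theorem mem_located {a : ℤ} {t : GT α} {p : ℤ × GT α} :
    p ∈ located a t ↔ p = (a, t) ∧ t ≠ .leaf := by
  cases t <;> simp [located]

theorem pairwise_replace {A M B : List (ℤ × GT α)} {x : ℤ × GT α}
    (hs : (A ++ x :: B).Pairwise Precedes) (hM : M.Pairwise Precedes)
    (hin : ∀ y ∈ M, x.1 ≤ y.1 ∧ y.1 + y.2.size ≤ x.1 + x.2.size) :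
    (A ++ M ++ B).Pairwise Precedes := by
  rw [pairwise_append, pairwise_cons] at hs
  obtain ⟨hA, ⟨hxB, hB⟩, hAxB⟩ := hs
  rw [append_assoc, pairwise_append, pairwise_append]
  refine ⟨hA, ⟨hM, hB, fun y hy z hz => ?_⟩, fun w hw y hy => ?_⟩
  · have := hxB z hz; have := hin y hy; unfold Precedes at *; omega
  · rcases mem_append.1 hy with hy | hy
    · have := hAxB w hw x mem_cons_self; have := hin y hy; unfold Precedes at *; omega
    · exact hAxB w hw y (mem_cons_of_mem _ hy)

def deleteRoot (A : List (ℤ × GT α)) (a : ℤ) (l r : GT α) (B : List (ℤ × GT α)) :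
    List (ℤ × GT α) :=
  A ++ (located a l ++ located (a + l.size + 1) r) ++ B

variable {A B : List (ℤ × GT α)} {a : ℤ} {c : α} {l r : GT α}

theorem mem_deleteRoot {p : ℤ × GT α} :
    p ∈ deleteRoot A a l r B ↔ p ∈ A ∨ (p = (a, l) ∧ l ≠ .leaf) ∨
      (p = (a + l.size + 1, r) ∧ r ≠ .leaf) ∨ p ∈ B := by
  simp only [deleteRoot, mem_append, mem_located, or_assoc]

theorem forestLabels_deleteRoot :
    forestLabels (A ++ (a, .node c l r) :: B) = c ::ₘ forestLabels (deleteRoot A a l r B) := by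
  have (b : ℤ) (t : GT α) : forestLabels (located b t) = t.labels := by
    cases t <;> simp [located, GT.labels]
  simp only [deleteRoot, forestLabels_append, forestLabels_cons, this, GT.labels,
    ← Multiset.singleton_add]
  abel

theorem pairwise_deleteRoot (hs : (A ++ (a, .node c l r) :: B).Pairwise Precedes) :
    (deleteRoot A a l r B).Pairwise Precedes := by
  refine pairwise_replace hs ?_ fun y hy => ?_
  · cases l <;> cases r <;> simp [located, Precedes]
  · simp only [mem_append, mem_located] at hy
    rcases hy with ⟨rfl, -⟩ | ⟨rfl, -⟩ <;> simp only [GT.size, Nat.cast_add, Nat.cast_one] <;>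
      omega

theorem bounds_of_pairwise (hs : (A ++ (a, .node c l r) :: B).Pairwise Precedes) :
    (∀ y ∈ A, y.1 + y.2.size + 1 ≤ a) ∧ ∀ y ∈ B, a + l.size + r.size + 2 ≤ y.1 := by
  have hs := pairwise_append.1 hs
  refine ⟨fun y hy => hs.2.2 y hy _ mem_cons_self, fun y hy => ?_⟩
  have := (pairwise_cons.1 hs.2.1).1 y hy
  simp only [Precedes, GT.size, Nat.cast_add, Nat.cast_one] at this
  omega

theorem graft_deleteRoot (hs : (A ++ (a, .node c l r) :: B).Pairwise Precedes) :
    graft (deleteRoot A a l r B) (a + l.size) c = A ++ (a, .node c l r) :: B := by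
  obtain ⟨hA, hB⟩ := bounds_of_pairwise hs
  have hL : treeBefore (deleteRoot A a l r B) (a + l.size) = l := by
    refine treeBefore_eq (by cases l <;> simp [mem_deleteRoot]) fun p hp hpj => ?_
    rcases mem_deleteRoot.1 hp with hp | ⟨rfl, -⟩ | ⟨rfl, -⟩ | hp
    · have := hA p hp; omega
    · rfl
    · dsimp only at hpj; omega
    · have := hB p hp; omega
  have hR : treeAfter (deleteRoot A a l r B) (a + l.size) = r := by
    refine treeAfter_eq (by cases r <;> simp [mem_deleteRoot]) fun p hp hpj => ?_
    rcases mem_deleteRoot.1 hp with hp | ⟨rfl, -⟩ | ⟨rfl, -⟩ | hp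
    · have := hA p hp; omega
    · dsimp only at hpj; omega
    · rfl
    · have := hB p hp; omega
  have hfilter : (deleteRoot A a l r B).filter
      (fun p => ¬(p.1 + p.2.size = a + l.size ∨ p.1 = a + l.size + 1)) = A ++ B := by
    rw [deleteRoot, filter_append, filter_append,
      (filter_eq_nil_iff (l := located a l ++ _)).2 fun p hp => ?_, append_nil,
      (filter_eq_self (l := A)).2 fun p hp => ?_, (filter_eq_self (l := B)).2 fun p hp => ?_]
    · have := hB p hp; simp only [decide_eq_true_eq]; omega
    · have := hA p hp; simp only [decide_eq_true_eq]; omega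
    · simp only [mem_append, mem_located] at hp
      rcases hp with ⟨rfl, -⟩ | ⟨rfl, -⟩ <;> simp
  rw [graft, hL, hR, hfilter, add_sub_cancel_right]
  exact insSorted_append_cons (fun y hy => by have := hA y hy; omega)
    fun y hy => by have := hB y hy; omega

end Deletion

section LabeledDeletion

variable {A B : LabeledForest} {a : ℤ} {c : (ℤ × ℕ) × ℕ} {l r : GT ((ℤ × ℕ) × ℕ)}

theorem WellFormed.deleteRoot (hs : WellFormed (A ++ (a, .node c l r) :: B)) :
    WellFormed (deleteRoot A a l r B) := by
  have hx : (a, .node c l r) ∈ A ++ (a, .node c l r) :: B := by simp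
  obtain ⟨-, -, -, hlLBS, hrLBS⟩ := isLBS_map_node_iff.1 (hs.isLBS _ hx)
  obtain ⟨-, -, hlDec, hrDec⟩ := isDec_map_node_iff.1 (hs.isDec _ hx)
  have hmem : ∀ p ∈ _root_.deleteRoot A a l r B, p ∈ A ++ (a, .node c l r) :: B ∨
      (p = (a, l) ∧ l ≠ .leaf) ∨ (p = (a + l.size + 1, r) ∧ r ≠ .leaf) := by
    intro p hp
    rw [mem_deleteRoot] at hp
    simp only [mem_append, mem_cons]
    tauto
  refine ⟨pairwise_deleteRoot hs.sorted, ?_, ?_, ?_⟩ <;> intro p hp <;>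
    rcases hmem p hp with hp | ⟨rfl, hl⟩ | ⟨rfl, hr⟩
  · exact hs.ne_leaf p hp
  · exact hl
  · exact hr
  · exact hs.isLBS p hp
  · exact hlLBS
  · exact hrLBS
  · exact hs.isDec p hp
  · exact hlDec
  · exact hrDec

theorem phiInsert_deleteRoot (hs : WellFormed (A ++ (a, .node c l r) :: B)) :
    phiInsert (deleteRoot A a l r B) c = A ++ (a, .node c l r) :: B := by
  have hs' := hs.deleteRoot
  obtain ⟨⟨hca, hcb⟩, hlt, hgt, -, -⟩ :=
    isLBS_map_node_iff.1 (hs.isLBS (a, .node c l r) (by simp))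
  dsimp only at hca
  simp only [GT.size, Nat.cast_add, Nat.cast_one] at hcb
  obtain ⟨hA, hB⟩ := bounds_of_pairwise hs.sorted
  rw [← graft_deleteRoot hs.sorted]
  rcases lt_trichotomy c.1.1 (a + l.size) with hcj | hcj | hcj
  · obtain ⟨k, ll, lr, rfl⟩ : ∃ k ll lr, l = .node k ll lr := by
      cases l with
      | leaf => simp only [GT.size, Nat.cast_zero] at hcj; omega
      | node k ll lr => exact ⟨k, ll, lr, rfl⟩
    exact insertL_eq_graft_of_lt hs'.sorted (by simp [mem_deleteRoot]) rfl ⟨hca, hcj⟩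
      (lexLtB_iff.2 hlt)
  · rw [← hcj]
    refine insertL_eq_graft_of_not_mem_suppS ?_
    rintro ⟨p, hp, hpc⟩
    rcases mem_deleteRoot.1 hp with hp | ⟨rfl, -⟩ | ⟨rfl, -⟩ | hp
    · have := hA p hp; omega
    · dsimp only at hpc; omega
    · dsimp only at hpc; omega
    · have := hB p hp; omega
  · obtain ⟨k, rl, rr, rfl⟩ : ∃ k rl rr, r = .node k rl rr := by
      cases r with
      | leaf => simp only [GT.size, Nat.cast_zero] at hcj hcb; omega
      | node k rl rr => exact ⟨k, rl, rr, rfl⟩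
    have := insertL_eq_graft_of_not_lt (val := fun x => x.1.1)
      (lt := fun p q => lexLtB p.1 q.1) (c := c) hs'.sorted
      (by simp [mem_deleteRoot] : (a + l.size + 1, GT.node k rl rr) ∈ deleteRoot A a l _ B) rfl
      ⟨by omega, by simp only [GT.size, Nat.cast_add, Nat.cast_one] at hcb ⊢; omega⟩
      (lexLtB_eq_false_of_lexLt (p := c.1) (q := k.1) hgt)
    rwa [add_sub_cancel_right] at this

end LabeledDeletion

section Phi

def timeStamp (W : List (ℤ × ℕ)) : List ((ℤ × ℕ) × ℕ) := W.zipIdx.map fun x => (x.1, x.2 + 1)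

theorem timeStamp_map_fst (W : List (ℤ × ℕ)) : (timeStamp W).map Prod.fst = W := by
  simp [timeStamp, Function.comp_def]

theorem timeStamp_map_snd (W : List (ℤ × ℕ)) :
    (timeStamp W).map Prod.snd = (range W.length).map (· + 1) := by
  rw [timeStamp, map_map]
  change map ((· + 1) ∘ Prod.snd) W.zipIdx = _
  rw [← map_map, zipIdx_map_snd, range_eq_range']

theorem length_timeStamp (W : List (ℤ × ℕ)) : (timeStamp W).length = W.length := by
  simp [timeStamp]

theorem timeStamp_append_singleton (W : List (ℤ × ℕ)) (x : ℤ × ℕ) :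
    timeStamp (W ++ [x]) = timeStamp W ++ [(x, W.length + 1)] := by
  simp [timeStamp, zipIdx_append]

theorem phi2_append_singleton (W : List (ℤ × ℕ)) (x : ℤ × ℕ) :
    Phi2 (W ++ [x]) = phiInsert (Phi2 W) (x, W.length + 1) := by
  change (timeStamp (W ++ [x])).foldl phiInsert [] = phiInsert ((timeStamp W).foldl phiInsert []) _
  rw [timeStamp_append_singleton, foldl_append]
  rfl

theorem wellFormed_phi2 {W : List (ℤ × ℕ)} (hW : W.Nodup) :
    WellFormed (Phi2 W) ∧ forestLabels (Phi2 W) = timeStamp W := by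
  induction W using reverseRecOn with
  | nil => exact ⟨⟨Pairwise.nil, nofun, nofun, nofun⟩, rfl⟩
  | append_singleton W x ih =>
    obtain ⟨hW, -, hx⟩ := nodup_append.1 hW
    obtain ⟨hs, hlabels⟩ := ih hW
    have hfresh : ∀ y ∈ forestLabels (Phi2 W), y.1 ≠ x := by
      rw [hlabels]
      intro y hy
      exact hx _ (timeStamp_map_fst W ▸ mem_map_of_mem (Multiset.mem_coe.1 hy)) _ mem_cons_self
    have htime : ∀ y ∈ forestLabels (Phi2 W), y.2 < W.length + 1 := by
      rw [hlabels]
      intro y hy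
      have := timeStamp_map_snd W ▸ mem_map_of_mem (f := Prod.snd) (Multiset.mem_coe.1 hy)
      simp only [mem_map, mem_range] at this
      omega
    obtain ⟨hs', hlabels'⟩ := wellFormed_phiInsert (c := (x, W.length + 1)) hs hfresh htime
    rw [phi2_append_singleton, hlabels', hlabels, timeStamp_append_singleton]
    exact ⟨hs', Multiset.coe_eq_coe.2 (perm_append_singleton _ _).symm⟩

theorem goodPair_iff (s : LabeledForest) :
    GoodPair s ↔ WellFormed s ∧ ((forestLabels s).map Prod.fst).Nodup ∧
      (forestLabels s).map Prod.snd =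
        (Multiset.range (Multiset.card (forestLabels s))).map (· + 1) := by
  rw [GoodPair, forestLabels_map, forestLabels_map, card_forestLabels]
  exact ⟨fun ⟨h1, h2, h3, h4, h5, h6⟩ =>
      ⟨⟨(isChain_iff_pairwise (R := Precedes)).1 h1, h2, h3, h5⟩, h4, h6⟩,
    fun ⟨⟨h1, h2, h3, h5⟩, h4, h6⟩ =>
      ⟨(isChain_iff_pairwise (R := Precedes)).2 h1, h2, h3, h4, h5, h6⟩⟩

theorem goodPair_phi2 {W : List (ℤ × ℕ)} (hW : W.Nodup) : GoodPair (Phi2 W) := by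
  obtain ⟨hs, hlabels⟩ := wellFormed_phi2 hW
  rw [goodPair_iff, hlabels, Multiset.map_coe, Multiset.map_coe, timeStamp_map_fst,
    timeStamp_map_snd, Multiset.coe_card, length_timeStamp, ← Multiset.coe_range,
    Multiset.map_coe]
  exact ⟨hs, hW, rfl⟩

theorem phi2_injective {W₁ W₂ : List (ℤ × ℕ)} (h₁ : W₁.Nodup) (h₂ : W₂.Nodup)
    (h : Phi2 W₁ = Phi2 W₂) : W₁ = W₂ := by
  have hsorted (W : List (ℤ × ℕ)) : (timeStamp W).Pairwise fun x y => x.2 < y.2 := by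
    refine pairwise_map.1 ?_
    rw [timeStamp_map_snd]
    exact pairwise_map.2 (pairwise_lt_range.imp fun h => by omega)
  have hperm : timeStamp W₁ ~ timeStamp W₂ := by
    rw [← Multiset.coe_eq_coe, ← (wellFormed_phi2 h₁).2, ← (wellFormed_phi2 h₂).2, h]
  rw [← timeStamp_map_fst W₁, ← timeStamp_map_fst W₂,
    hperm.eq_of_pairwise (fun _ _ _ _ h h' => absurd (h.trans h') (lt_irrefl _)) (hsorted W₁)
      (hsorted W₂)]

end Phi

section Surjectivity

variable {s : LabeledForest}

theorem WellFormed.card_forestLabels_pos (hs : WellFormed s) (hne : s ≠ []) :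
    0 < Multiset.card (forestLabels s) := by
  obtain ⟨⟨a, t⟩, hp⟩ := exists_mem_of_ne_nil s hne
  cases t with
  | leaf => exact absurd rfl (hs.ne_leaf _ hp)
  | node k l r =>
    exact Multiset.card_pos_iff_exists_mem.2 ⟨k, mem_forestLabels.2 ⟨_, hp, by simp [GT.labels]⟩⟩

theorem WellFormed.exists_eq_append_root (hs : WellFormed s) {c : (ℤ × ℕ) × ℕ}
    (hc : c ∈ forestLabels s) (hmax : ∀ x ∈ forestLabels s, c.2 ≤ x.2 → x = c) :
    ∃ A B a l r, s = A ++ (a, .node c l r) :: B := by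
  obtain ⟨⟨a, t⟩, hmem, hct⟩ := mem_forestLabels.1 hc
  cases t with
  | leaf => simp [GT.labels] at hct
  | node k l r =>
    have hk : k = c := hmax k (mem_forestLabels.2 ⟨_, hmem, by simp [GT.labels]⟩) <|
      (hs.isDec _ hmem).le_root c.2 (by
        rw [← GT.map, GT.labels_map]
        exact Multiset.mem_map_of_mem _ hct)
    obtain ⟨A, B, rfl⟩ := append_of_mem hmem
    exact ⟨A, B, a, l, r, hk ▸ rfl⟩

theorem GoodPair.exists_root_eq_card (hs : GoodPair s) (hne : s ≠ []) :
    ∃ A B a c l r, s = A ++ (a, .node c l r) :: B ∧ c.2 = Multiset.card (forestLabels s) := by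
  obtain ⟨hwf, -, htimes⟩ := (goodPair_iff s).1 hs
  set N := Multiset.card (forestLabels s)
  have hN := hwf.card_forestLabels_pos hne
  obtain ⟨c, hc, hcN⟩ : ∃ c ∈ forestLabels s, c.2 = N := by
    have : N ∈ (forestLabels s).map Prod.snd := by
      rw [htimes]
      exact Multiset.mem_map.2 ⟨N - 1, Multiset.mem_range.2 (by omega), by omega⟩
    simpa using this
  have hmax : ∀ x ∈ forestLabels s, c.2 ≤ x.2 → x = c := fun x hx hcx => by
    have hnodup : ((forestLabels s).map Prod.snd).Nodup := by
      rw [htimes]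
      exact (Multiset.nodup_range _).map fun _ _ h => by omega
    have hxN := Multiset.mem_map_of_mem Prod.snd hx
    rw [htimes] at hxN
    simp only [Multiset.mem_map, Multiset.mem_range] at hxN
    exact Multiset.inj_on_of_nodup_map hnodup x hx c hc (by omega)
  obtain ⟨A, B, a, l, r, hs⟩ := hwf.exists_eq_append_root hc hmax
  exact ⟨A, B, a, c, l, r, hs, hcN⟩

variable {A B : LabeledForest} {a : ℤ} {c : (ℤ × ℕ) × ℕ} {l r : GT ((ℤ × ℕ) × ℕ)}

theorem GoodPair.deleteRoot (hs : GoodPair (A ++ (a, .node c l r) :: B))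
    (hc : c.2 = Multiset.card (forestLabels (A ++ (a, .node c l r) :: B))) :
    GoodPair (deleteRoot A a l r B) ∧ c.1 ∉ (forestLabels (deleteRoot A a l r B)).map Prod.fst := by
  obtain ⟨hwf, hnodup, htimes⟩ := (goodPair_iff _).1 hs
  rw [forestLabels_deleteRoot] at hnodup htimes hc
  rw [Multiset.map_cons, Multiset.nodup_cons] at hnodup
  rw [Multiset.card_cons] at hc
  rw [Multiset.card_cons, Multiset.map_cons, Multiset.range_succ, Multiset.map_cons, ← hc,
    Multiset.cons_inj_right] at htimes
  exact ⟨(goodPair_iff _).2 ⟨hwf.deleteRoot, hnodup.2, htimes⟩, hnodup.1⟩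

theorem exists_phi2_eq (N : ℕ) : ∀ s : LabeledForest, GoodPair s →
    Multiset.card (forestLabels s) = N → ∃ W : List (ℤ × ℕ), W.Nodup ∧ Phi2 W = s := by
  induction N with
  | zero =>
    intro s hs hN
    have hs : s = [] := by
      by_contra hne
      exact absurd hN (((goodPair_iff s).1 hs).1.card_forestLabels_pos hne).ne'
    exact ⟨[], nodup_nil, hs.symm⟩
  | succ N ih =>
    intro s hs hN
    obtain ⟨A, B, a, c, l, r, rfl, hc⟩ := hs.exists_root_eq_card (by rintro rfl; simp at hN)
    obtain ⟨hs', hfresh⟩ := hs.deleteRoot hc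
    have hN' : Multiset.card (forestLabels (deleteRoot A a l r B)) = N := by
      rw [forestLabels_deleteRoot, Multiset.card_cons] at hN
      omega
    obtain ⟨W, hW, hphi⟩ := ih _ hs' hN'
    have hlabels := (wellFormed_phi2 hW).2
    rw [hphi] at hlabels
    have hlen : W.length = N := by
      rw [← hN', hlabels, Multiset.coe_card, length_timeStamp]
    refine ⟨W ++ [c.1], nodup_append.2 ⟨hW, nodup_singleton _, ?_⟩, ?_⟩
    · intro x hx y hy hxy
      rw [mem_singleton] at hy
      rw [hlabels, Multiset.map_coe, timeStamp_map_fst] at hfresh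
      exact hfresh (by simpa [← hy, ← hxy] using hx)
    · have hc' : (c.1, W.length + 1) = c := Prod.ext rfl (by rw [hc, hN, hlen])
      rw [phi2_append_singleton, hphi, hc']
      exact phiInsert_deleteRoot ((goodPair_iff _).1 hs).1

end Surjectivity

/-- the insertion correspondence `Φ` is a bijection between
injective words over the alphabet `{i^{(j)}}` and pairs `(P, Q)` where `P` is a
local binary search labeling and `Q` a decreasing labeling of a common indexed
forest. -/
theorem phi_bijection :
    (∀ W : List (ℤ × ℕ), W.Nodup → GoodPair (Phi2 W)) ∧
    (∀ s : List (ℤ × GT ((ℤ × ℕ) × ℕ)), GoodPair s →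
      ∃! W : List (ℤ × ℕ), W.Nodup ∧ Phi2 W = s) := by
  refine ⟨fun W hW => goodPair_phi2 hW, fun s hs => ?_⟩
  obtain ⟨W, hW, hphi⟩ := exists_phi2_eq _ s hs rfl
  exact ⟨W, ⟨hW, hphi⟩, fun W' ⟨hW', hphi'⟩ => phi2_injective hW' hW (hphi'.trans hphi.symm)⟩
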